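/- arXiv:2502.09570 — 5 statements merged into one kernel-verified Lean document; each statement's English description precedes it below -/
import Mathlib

section
/- The Shrikhande graph S is strongly regular with parameters (16, 6, 2, 2): it has 16 vertices, is 6-regular, every pair of adjacent vertices has exactly 2 common neighbors, and every pair of non-adjacent vertices has exactly 2 common neighbors. -/
/-- The difference set defining the Shrikhande graph. -/
def shrikhandeDiffs : Finset (ZMod 4 × ZMod 4) :=
  {(1, 0), (-1, 0), (0, 1), (0, -1), (1, 1), (-1, -1)}

lemma shrikhandeDiffs_neg : ∀ x ∈ shrikhandeDiffs, -x ∈ shrikhandeDiffs := by decide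

def shrikhande : SimpleGraph (ZMod 4 × ZMod 4) where
  Adj u v := u ≠ v ∧ u - v ∈ shrikhandeDiffs
  symm := ⟨fun u v h => ⟨h.1.symm, by
    have := shrikhandeDiffs_neg _ h.2
    rwa [neg_sub] at this⟩⟩
  loopless := ⟨fun _ h => h.1 rfl⟩

instance : DecidableRel shrikhande.Adj := fun u v =>
  inferInstanceAs (Decidable (u ≠ v ∧ u - v ∈ shrikhandeDiffs))

/-- The Shrikhande graph is strongly regular with parameters (16, 6, 2, 2). -/
theorem shrikhande_isSRGWith : shrikhande.IsSRGWith 16 6 2 2 := by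
  refine ⟨by decide, fun v => ?_, fun v w h => ?_, fun v w hne h => ?_⟩
  · revert v; decide
  · revert h; revert v w
    show ∀ v w, shrikhande.Adj v w → Fintype.card (shrikhande.commonNeighbors v w) = 2
    decide
  · revert h hne; revert v w
    show ∀ v w : ZMod 4 × ZMod 4, v ≠ w → ¬shrikhande.Adj v w → Fintype.card (shrikhande.commonNeighbors v w) = 2
    decide
end

section
/- The 4×4 rook's graph and the Shrikhande graph are not isomorphic: there is no graph isomorphism between them. -/
def rook : SimpleGraph (Fin 4 × Fin 4) where
  Adj u v := u ≠ v ∧ (u.1 = v.1 ∨ u.2 = v.2)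
  symm := ⟨fun _ _ h => ⟨h.1.symm, h.2.imp Eq.symm Eq.symm⟩⟩
  loopless := ⟨fun _ h => h.1 rfl⟩

instance : DecidableRel rook.Adj := fun u v =>
  inferInstanceAs (Decidable (u ≠ v ∧ (u.1 = v.1 ∨ u.2 = v.2)))

/-- No 4-clique in the Shrikhande graph, in translated form. -/
lemma no_k4 : ∀ a b c : ZMod 4 × ZMod 4,
    ¬(a ∈ shrikhandeDiffs ∧ b ∈ shrikhandeDiffs ∧ c ∈ shrikhandeDiffs ∧
      a - b ∈ shrikhandeDiffs ∧ a - c ∈ shrikhandeDiffs ∧ b - c ∈ shrikhandeDiffs) := by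
  decide

/-- The 4×4 rook's graph and the Shrikhande graph are not isomorphic. -/
theorem rook_not_iso_shrikhande : IsEmpty (rook ≃g shrikhande) := by
  constructor
  intro f
  have adj : ∀ i j : Fin 4, i ≠ j → shrikhande.Adj (f (0, i)) (f (0, j)) := by
    intro i j hij
    exact f.map_adj_iff.2 ⟨by simpa using fun h => hij h, Or.inl rfl⟩
  have h01 := (adj 1 0 (by decide)).2
  have h02 := (adj 2 0 (by decide)).2
  have h03 := (adj 3 0 (by decide)).2
  have h12 := (adj 1 2 (by decide)).2
  have h13 := (adj 1 3 (by decide)).2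
  have h23 := (adj 2 3 (by decide)).2
  refine no_k4 (f (0,1) - f (0,0)) (f (0,2) - f (0,0)) (f (0,3) - f (0,0))
    ⟨h01, h02, h03, ?_, ?_, ?_⟩ <;> simpa [sub_sub_sub_cancel_right]
end

section
/- The 4×4 rook's graph and the Shrikhande graph are isospectral: the characteristic polynomials over ℝ of their adjacency matrices are equal. -/
open Matrix Polynomial

def Am : Matrix (Fin 16) (Fin 16) ℤ :=
  !![0, 1, 1, 1, 1, 0, 0, 0, 1, 0, 0, 0, 1, 0, 0, 0;
  1, 0, 1, 1, 0, 1, 0, 0, 0, 1, 0, 0, 0, 1, 0, 0;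
  1, 1, 0, 1, 0, 0, 1, 0, 0, 0, 1, 0, 0, 0, 1, 0;
  1, 1, 1, 0, 0, 0, 0, 1, 0, 0, 0, 1, 0, 0, 0, 1;
  1, 0, 0, 0, 0, 1, 1, 1, 1, 0, 0, 0, 1, 0, 0, 0;
  0, 1, 0, 0, 1, 0, 1, 1, 0, 1, 0, 0, 0, 1, 0, 0;
  0, 0, 1, 0, 1, 1, 0, 1, 0, 0, 1, 0, 0, 0, 1, 0;
  0, 0, 0, 1, 1, 1, 1, 0, 0, 0, 0, 1, 0, 0, 0, 1;
  1, 0, 0, 0, 1, 0, 0, 0, 0, 1, 1, 1, 1, 0, 0, 0;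
  0, 1, 0, 0, 0, 1, 0, 0, 1, 0, 1, 1, 0, 1, 0, 0;
  0, 0, 1, 0, 0, 0, 1, 0, 1, 1, 0, 1, 0, 0, 1, 0;
  0, 0, 0, 1, 0, 0, 0, 1, 1, 1, 1, 0, 0, 0, 0, 1;
  1, 0, 0, 0, 1, 0, 0, 0, 1, 0, 0, 0, 0, 1, 1, 1;
  0, 1, 0, 0, 0, 1, 0, 0, 0, 1, 0, 0, 1, 0, 1, 1;
  0, 0, 1, 0, 0, 0, 1, 0, 0, 0, 1, 0, 1, 1, 0, 1;
  0, 0, 0, 1, 0, 0, 0, 1, 0, 0, 0, 1, 1, 1, 1, 0]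

def Bm : Matrix (Fin 16) (Fin 16) ℤ :=
  !![0, 1, 0, 1, 1, 1, 0, 0, 0, 0, 0, 0, 1, 0, 0, 1;
  1, 0, 1, 0, 0, 1, 1, 0, 0, 0, 0, 0, 1, 1, 0, 0;
  0, 1, 0, 1, 0, 0, 1, 1, 0, 0, 0, 0, 0, 1, 1, 0;
  1, 0, 1, 0, 1, 0, 0, 1, 0, 0, 0, 0, 0, 0, 1, 1;
  1, 0, 0, 1, 0, 1, 0, 1, 1, 1, 0, 0, 0, 0, 0, 0;
  1, 1, 0, 0, 1, 0, 1, 0, 0, 1, 1, 0, 0, 0, 0, 0;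
  0, 1, 1, 0, 0, 1, 0, 1, 0, 0, 1, 1, 0, 0, 0, 0;
  0, 0, 1, 1, 1, 0, 1, 0, 1, 0, 0, 1, 0, 0, 0, 0;
  0, 0, 0, 0, 1, 0, 0, 1, 0, 1, 0, 1, 1, 1, 0, 0;
  0, 0, 0, 0, 1, 1, 0, 0, 1, 0, 1, 0, 0, 1, 1, 0;
  0, 0, 0, 0, 0, 1, 1, 0, 0, 1, 0, 1, 0, 0, 1, 1;
  0, 0, 0, 0, 0, 0, 1, 1, 1, 0, 1, 0, 1, 0, 0, 1;
  1, 1, 0, 0, 0, 0, 0, 0, 1, 0, 0, 1, 0, 1, 0, 1;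
  0, 1, 1, 0, 0, 0, 0, 0, 1, 1, 0, 0, 1, 0, 1, 0;
  0, 0, 1, 1, 0, 0, 0, 0, 0, 1, 1, 0, 0, 1, 0, 1;
  1, 0, 0, 1, 0, 0, 0, 0, 0, 0, 1, 1, 1, 0, 1, 0]

def Pm : Matrix (Fin 16) (Fin 16) ℤ :=
  !![-2, 1, 0, 3, -1, -2, 1, 4, 1, 0, -1, 2, 0, 3, -2, -3;
  2, 1, -1, 0, -1, 2, -4, 1, 0, 7, 1, -2, -3, -4, 2, 3;
  -1, 2, 2, -1, 0, -1, 3, -4, 0, -1, 3, 0, 3, 2, -2, -1;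
  1, -1, 2, 0, 0, 2, 1, -1, 0, -2, 1, -1, 1, -1, 2, 0;
  3, -1, 1, -1, 4, 0, -2, 4, -2, 2, 0, -2, -3, -3, 3, 1;
  -2, 2, -1, 3, -1, 3, 4, -4, 1, -3, 2, 6, 0, 0, -7, 1;
  1, 0, 2, -1, 0, -1, -3, 2, 3, 2, 0, 1, -2, 1, 3, -4;
  2, 0, 1, -1, 1, -1, 4, -2, 1, -1, 0, -2, 2, 0, 1, -1;
  -1, 0, 0, 1, 1, 2, 2, -1, 1, -2, -2, -1, 3, 0, 0, 1;
  0, 0, 0, 0, 0, 0, 0, 4, 0, 0, 0, 0, 0, 0, 0, 0;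
  0, -1, 0, 1, 0, -1, 0, 1, 0, 3, 0, 1, 0, -1, 0, 1;
  1, 0, -1, 0, 1, 0, -1, 0, 0, -1, 2, -1, 2, 1, 0, 1;
  0, 1, -1, 0, 0, 1, -1, 0, -1, 0, -2, 3, 1, 2, 0, 1;
  0, 0, 0, 0, 0, 0, 0, 0, 0, 0, 0, 0, 0, 4, 0, 0;
  0, 0, 0, 0, 0, 0, 0, 0, 0, 0, 0, 0, 0, 0, 4, 0;
  0, 0, 0, 0, 0, 0, 0, 0, 0, 0, 0, 0, 0, 0, 0, 4]

def Qm : Matrix (Fin 16) (Fin 16) ℤ :=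
  !![-2, -1, 2, -3, 0, 0, 0, -4, 3, 2, 1, -2, -3, 1, 3, -1;
  -3, -2, -2, 1, -1, 0, 0, -1, 0, 1, 5, 0, -2, 3, -1, -2;
  -2, 0, -2, -4, -1, 1, -1, 1, 0, 2, 0, 2, -1, 1, 3, -3;
  -5, -1, 1, -3, -1, 0, 1, 0, 0, 6, 0, -2, 0, 1, 0, -1;
  1, 1, -1, 3, -3, -1, -1, 1, -3, 1, -1, -1, 1, -1, -1, 1;
  2, -1, 0, -1, 0, -1, 0, 1, -2, -3, 0, 1, 0, -3, 0, 3;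
  1, 0, 0, 1, 0, -1, 1, -2, 0, -3, -1, 2, 1, -2, -2, 1;
  0, 0, 0, 0, 0, 0, 0, 0, 0, -4, 0, 0, 0, 0, 0, 0;
  1, 0, 1, 2, 1, -1, -3, -1, -2, -1, 0, -1, 2, 0, 0, -2;
  1, -1, -1, 1, 0, 0, 0, 0, -1, -1, -3, 1, 0, -2, 0, 2;
  1, 0, -1, 0, 0, -1, 0, 1, 1, -2, -1, -2, 2, -1, -2, 1;
  1, 1, 0, 0, 0, -1, -1, 0, 1, -1, -2, 0, -2, 1, -1, 0;
  0, 0, -1, -1, 1, 1, 0, 0, -1, -1, -2, -2, -2, 2, 1, 1;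
  0, 0, 0, 0, 0, 0, 0, 0, 0, 0, 0, 0, 0, -4, 0, 0;
  0, 0, 0, 0, 0, 0, 0, 0, 0, 0, 0, 0, 0, 0, -4, 0;
  0, 0, 0, 0, 0, 0, 0, 0, 0, 0, 0, 0, 0, 0, 0, -4]


def eF : Fin 4 × Fin 4 → Fin 16 := fun p => ⟨4 * p.1.val + p.2.val, by omega⟩

def eZ : ZMod 4 × ZMod 4 → Fin 16 := fun p =>
  ⟨4 * p.1.val + p.2.val, by
    have h1 : p.1.val < 4 := p.1.val_lt
    have h2 : p.2.val < 4 := p.2.val_lt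
    omega⟩

def A₀ : Matrix (Fin 4 × Fin 4) (Fin 4 × Fin 4) ℤ := fun u v => Am (eF u) (eF v)
def B₁ : Matrix (Fin 4 × Fin 4) (Fin 4 × Fin 4) ℤ := fun u v => Bm (eF u) (eF v)
def P₀ : Matrix (Fin 4 × Fin 4) (Fin 4 × Fin 4) ℤ := fun u v => Pm (eF u) (eF v)
def Q₀ : Matrix (Fin 4 × Fin 4) (Fin 4 × Fin 4) ℤ := fun u v => Qm (eF u) (eF v)

def ε : ZMod 4 × ZMod 4 ≃ Fin 4 × Fin 4 :=
  Equiv.prodCongr (finCongr rfl) (finCongr rfl)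

lemma hA : rook.adjMatrix ℤ = A₀ := by decide
lemma hB : Matrix.reindex ε ε (shrikhande.adjMatrix ℤ) = B₁ := by decide
lemma hBP : B₁ * P₀ = P₀ * A₀ := by decide
lemma hPQ : P₀ * Q₀ = Matrix.diagonal (fun _ => -16) := by decide
lemma hQP : Q₀ * P₀ = Matrix.diagonal (fun _ => -16) := by decide

lemma charpoly_conj {n : Type*} [Fintype n] [DecidableEq n] {R : Type*} [CommRing R]
    (P A : Matrix n n R) [Invertible P] : (P * A * ⅟P).charpoly = A.charpoly := by
  have h1 : (C : R →+* R[X]).mapMatrix P * (C : R →+* R[X]).mapMatrix (⅟P) = 1 := by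
    rw [← _root_.map_mul, mul_invOf_self, _root_.map_one]
  have hcomm : Matrix.scalar n (X : R[X]) * (C : R →+* R[X]).mapMatrix P
      = (C : R →+* R[X]).mapMatrix P * Matrix.scalar n (X : R[X]) :=
    (scalar_commute (X : R[X]) (fun r' => Commute.all _ _) _).eq
  have hs : (C : R →+* R[X]).mapMatrix P * Matrix.scalar n (X : R[X])
      * (C : R →+* R[X]).mapMatrix (⅟P) = Matrix.scalar n (X : R[X]) := by
    rw [← hcomm, mul_assoc, h1, mul_one]
  have hc : charmatrix (P * A * ⅟P) = (C : R →+* R[X]).mapMatrix P * charmatrix A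
      * (C : R →+* R[X]).mapMatrix (⅟P) := by
    rw [charmatrix, charmatrix, mul_sub, sub_mul, hs, _root_.map_mul, _root_.map_mul, mul_assoc]
  have h3 : ((C : R →+* R[X]).mapMatrix P).det * ((C : R →+* R[X]).mapMatrix (⅟P)).det = 1 := by
    rw [← det_mul, h1, det_one]
  rw [Matrix.charpoly, Matrix.charpoly, hc, det_mul, det_mul, mul_right_comm, h3, one_mul]

/-- The 4×4 rook's graph and the Shrikhande graph are isospectral: the characteristic
polynomials over ℝ of their adjacency matrices are equal. -/
theorem rook_shrikhande_isospectral :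
    (rook.adjMatrix ℝ).charpoly = (shrikhande.adjMatrix ℝ).charpoly := by
  have g := (Int.castRingHom ℝ).mapMatrix (m := Fin 4 × Fin 4)
  set Ar : Matrix (Fin 4 × Fin 4) (Fin 4 × Fin 4) ℝ := A₀.map (Int.cast : ℤ → ℝ) with hAr
  set Br : Matrix (Fin 4 × Fin 4) (Fin 4 × Fin 4) ℝ := B₁.map (Int.cast : ℤ → ℝ) with hBr
  set Pr : Matrix (Fin 4 × Fin 4) (Fin 4 × Fin 4) ℝ := P₀.map (Int.cast : ℤ → ℝ) with hPr
  set Qr : Matrix (Fin 4 × Fin 4) (Fin 4 × Fin 4) ℝ := Q₀.map (Int.cast : ℤ → ℝ) with hQr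
  have mapmul : ∀ X Y : Matrix (Fin 4 × Fin 4) (Fin 4 × Fin 4) ℤ,
      (X * Y).map (Int.cast : ℤ → ℝ) = X.map (Int.cast : ℤ → ℝ) * Y.map (Int.cast : ℤ → ℝ) :=
    fun X Y => by exact Matrix.map_mul (f := Int.castRingHom ℝ)
  have hdiag : (Matrix.diagonal (fun _ => (-16 : ℤ)) :
      Matrix (Fin 4 × Fin 4) (Fin 4 × Fin 4) ℤ).map (Int.cast : ℤ → ℝ)
      = (-16 : ℝ) • 1 := by
    rw [Matrix.diagonal_map (by simp)]
    ext i j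
    by_cases h : i = j <;> simp [h, Matrix.one_apply, Matrix.diagonal_apply]
  have hPQr : Pr * Qr = (-16 : ℝ) • 1 := by rw [hPr, hQr, ← mapmul, hPQ, hdiag]
  have hQPr : Qr * Pr = (-16 : ℝ) • 1 := by rw [hPr, hQr, ← mapmul, hQP, hdiag]
  have hinv : Invertible Pr := by
    refine ⟨(-16 : ℝ)⁻¹ • Qr, ?_, ?_⟩
    · rw [Matrix.smul_mul, hQPr, smul_smul]
      norm_num
    · rw [Matrix.mul_smul, hPQr, smul_smul]
      norm_num
  have hBPr : Br * Pr = Pr * Ar := by rw [hAr, hBr, hPr, ← mapmul, ← mapmul, hBP]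
  have hconj : Br = Pr * Ar * ⅟Pr := by
    calc Br = Br * (Pr * ⅟Pr) := by rw [mul_invOf_self, mul_one]
    _ = (Br * Pr) * ⅟Pr := by rw [mul_assoc]
    _ = Pr * Ar * ⅟Pr := by rw [hBPr]
  have hadjA : rook.adjMatrix ℝ = Ar := by
    rw [hAr, ← hA]
    ext u v
    simp [Matrix.map_apply, apply_ite (Int.cast : ℤ → ℝ)]
  have hadjB : Matrix.reindex ε ε (shrikhande.adjMatrix ℝ) = Br := by
    rw [hBr, ← hB]
    ext u v
    simp [Matrix.map_apply, Matrix.reindex_apply, apply_ite (Int.cast : ℤ → ℝ)]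
  calc (rook.adjMatrix ℝ).charpoly = Ar.charpoly := by rw [hadjA]
  _ = (Pr * Ar * ⅟Pr).charpoly := (charpoly_conj Pr Ar).symm
  _ = (Matrix.reindex ε ε (shrikhande.adjMatrix ℝ)).charpoly := by rw [hadjB, hconj]
  _ = (shrikhande.adjMatrix ℝ).charpoly := Matrix.charpoly_reindex ε _
end

section
/- Every vertex of the Shrikhande graph is contained in exactly 6 maximal cliques. -/
/-- A maximal clique of a simple graph: a set of pairwise adjacent vertices not properly
contained in any other set of pairwise adjacent vertices. -/
def IsMaxClique {V : Type*} (G : SimpleGraph V) (s : Set V) : Prop :=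
  G.IsClique s ∧ ∀ t : Set V, G.IsClique t → s ⊆ t → s = t

set_option maxRecDepth 10000

abbrev V4 := ZMod 4 × ZMod 4

def tris (v : V4) : Finset (Finset V4) :=
  { {v, v+(1,0), v+(1,1)}, {v, v+(0,1), v+(1,1)}, {v, v+(1,0), v+(0,-1)},
    {v, v+(-1,0), v+(-1,-1)}, {v, v+(0,-1), v+(-1,-1)}, {v, v+(-1,0), v+(0,1)} }

lemma L0 : ∀ v : V4,
    (shrikhande.Adj v (v+(1,0)) ∧ shrikhande.Adj v (v+(1,1)) ∧ shrikhande.Adj (v+(1,0)) (v+(1,1))) ∧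
    (shrikhande.Adj v (v+(0,1)) ∧ shrikhande.Adj v (v+(1,1)) ∧ shrikhande.Adj (v+(0,1)) (v+(1,1))) ∧
    (shrikhande.Adj v (v+(1,0)) ∧ shrikhande.Adj v (v+(0,-1)) ∧ shrikhande.Adj (v+(1,0)) (v+(0,-1))) ∧
    (shrikhande.Adj v (v+(-1,0)) ∧ shrikhande.Adj v (v+(-1,-1)) ∧ shrikhande.Adj (v+(-1,0)) (v+(-1,-1))) ∧
    (shrikhande.Adj v (v+(0,-1)) ∧ shrikhande.Adj v (v+(-1,-1)) ∧ shrikhande.Adj (v+(0,-1)) (v+(-1,-1))) ∧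
    (shrikhande.Adj v (v+(-1,0)) ∧ shrikhande.Adj v (v+(0,1)) ∧ shrikhande.Adj (v+(-1,0)) (v+(0,1))) := by
  decide

set_option maxHeartbeats 4000000 in
lemma L2' : ∀ v a b w : V4, ¬(shrikhande.Adj v a ∧ shrikhande.Adj v b ∧ shrikhande.Adj a b ∧
    shrikhande.Adj w v ∧ shrikhande.Adj w a ∧ shrikhande.Adj w b) := by decide

lemma L2 : ∀ v a b w : V4, shrikhande.Adj v a → shrikhande.Adj v b → shrikhande.Adj a b →
    shrikhande.Adj w v → shrikhande.Adj w a → shrikhande.Adj w b → False := by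
  intro v a b w h1 h2 h3 h4 h5 h6
  exact L2' v a b w ⟨h1, h2, h3, h4, h5, h6⟩

lemma L3 : ∀ v a b : V4, shrikhande.Adj v a → shrikhande.Adj v b → shrikhande.Adj a b →
    ({v,a,b} : Finset V4) ∈ tris v := by decide

lemma L4 : ∀ v a : V4, shrikhande.Adj v a →
    ∃ b, shrikhande.Adj v b ∧ shrikhande.Adj a b ∧ b ≠ v ∧ b ≠ a := by decide

lemma L5 : ∀ v : V4, (tris v).card = 6 := by decide

lemma maxclique_of_triple (v a b : V4) (hva : shrikhande.Adj v a) (hvb : shrikhande.Adj v b)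
    (hab : shrikhande.Adj a b) : IsMaxClique shrikhande ({v, a, b} : Set V4) := by
  constructor
  · intro x hx y hy hxy
    simp only [Set.mem_insert_iff, Set.mem_singleton_iff] at hx hy
    rcases hx with rfl | rfl | rfl <;> rcases hy with rfl | rfl | rfl <;>
      first
        | exact absurd rfl hxy
        | assumption
        | exact hva.symm
        | exact hvb.symm
        | exact hab.symm
  · intro u hu hsub
    refine Set.Subset.antisymm hsub fun w hw => ?_
    by_contra hwt
    simp only [Set.mem_insert_iff, Set.mem_singleton_iff, not_or] at hwt
    obtain ⟨h1, h2, h3⟩ := hwt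
    have adjw : ∀ x ∈ ({v, a, b} : Set V4), w ≠ x → shrikhande.Adj w x :=
      fun x hx hne => hu hw (hsub hx) hne
    exact L2 v a b w hva hvb hab
      (adjw v (by simp) h1) (adjw a (by simp) h2) (adjw b (by simp) h3)

lemma mem_tris_iff (v : V4) (t : Finset V4) : t ∈ tris v ↔
    t = {v, v+(1,0), v+(1,1)} ∨ t = {v, v+(0,1), v+(1,1)} ∨ t = {v, v+(1,0), v+(0,-1)} ∨
    t = {v, v+(-1,0), v+(-1,-1)} ∨ t = {v, v+(0,-1), v+(-1,-1)} ∨ t = {v, v+(-1,0), v+(0,1)} := by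
  simp [tris]

lemma coe_triple (v a b : V4) : (({v, a, b} : Finset V4) : Set V4) = ({v, a, b} : Set V4) := by
  simp

lemma maxclique_of_mem_tris (v : V4) (t : Finset V4) (ht : t ∈ tris v) :
    IsMaxClique shrikhande (↑t : Set V4) ∧ v ∈ (↑t : Set V4) := by
  have h0 := L0 v
  rw [mem_tris_iff] at ht
  rcases ht with rfl | rfl | rfl | rfl | rfl | rfl <;>
    rw [coe_triple] <;>
    exact ⟨maxclique_of_triple _ _ _ (by tauto) (by tauto) (by tauto), by simp⟩

lemma vadd_ne : ∀ v : V4, v + (1,0) ≠ v := by decide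

/-- Every vertex of the Shrikhande graph is contained in exactly 6 maximal cliques. -/
theorem shrikhande_vertex_in_six_maxCliques (v : ZMod 4 × ZMod 4) :
    {s : Set (ZMod 4 × ZMod 4) | IsMaxClique shrikhande s ∧ v ∈ s}.ncard = 6 := by
  have hset : {s : Set (ZMod 4 × ZMod 4) | IsMaxClique shrikhande s ∧ v ∈ s} =
      (fun t : Finset V4 => (↑t : Set V4)) '' ↑(tris v) := by
    ext s
    simp only [Set.mem_setOf_eq, Set.mem_image, Finset.mem_coe]
    constructor
    · rintro ⟨⟨hc, hmax⟩, hv⟩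
      by_cases h1 : ∃ a ∈ s, a ≠ v
      · obtain ⟨a, ha, hav⟩ := h1
        by_cases h2 : ∃ b ∈ s, b ≠ v ∧ b ≠ a
        · obtain ⟨b, hb, hbv, hba⟩ := h2
          have hva : shrikhande.Adj v a := hc hv ha (Ne.symm hav)
          have hvb : shrikhande.Adj v b := hc hv hb (Ne.symm hbv)
          have hab : shrikhande.Adj a b := hc ha hb (Ne.symm hba)
          refine ⟨{v, a, b}, L3 v a b hva hvb hab, ?_⟩
          rw [coe_triple]
          have hm := maxclique_of_triple v a b hva hvb hab
          refine hm.2 s hc ?_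
          intro x hx
          simp only [Set.mem_insert_iff, Set.mem_singleton_iff] at hx
          rcases hx with rfl | rfl | rfl <;> assumption
        · push_neg at h2
          have hva : shrikhande.Adj v a := hc hv ha (Ne.symm hav)
          obtain ⟨b, hvb, hab, hbv, hba⟩ := L4 v a hva
          exfalso
          have hsy : ∀ y ∈ s, shrikhande.Adj b y := by
            intro y hy
            by_cases hyv : y = v
            · subst hyv; exact hvb.symm
            · have := h2 y hy hyv; subst this; exact hab.symm
          have hclique : shrikhande.IsClique (insert b s) := by
            intro x hx y hy hxy
            rcases hx with rfl | hx
            · rcases hy with rfl | hy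
              · exact absurd rfl hxy
              · exact hsy y hy
            · rcases hy with rfl | hy
              · exact (hsy x hx).symm
              · exact hc hx hy hxy
          have heq := hmax _ hclique (Set.subset_insert b s)
          have hbs : b ∈ s := heq ▸ Set.mem_insert b s
          by_cases hb : b = v
          · exact hbv hb
          · exact hba (h2 b hbs hb)
      · push_neg at h1
        exfalso
        have ht : ({v, v+(1,0), v+(1,1)} : Finset V4) ∈ tris v := by
          rw [mem_tris_iff]; left; rfl
        obtain ⟨⟨htc, _⟩, hvt⟩ := maxclique_of_mem_tris v _ ht
        have hsub : s ⊆ (↑({v, v+(1,0), v+(1,1)} : Finset V4) : Set V4) := by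
          intro x hx; rw [h1 x hx]; exact hvt
        have heq := hmax _ htc hsub
        have hmem : v + (1,0) ∈ s := by
          rw [heq, coe_triple]; simp
        exact vadd_ne v (h1 _ hmem)
    · rintro ⟨t, ht, rfl⟩
      obtain ⟨hm, hv⟩ := maxclique_of_mem_tris v t ht
      exact ⟨hm, hv⟩
  rw [hset, Set.ncard_image_of_injective _ Finset.coe_injective, Set.ncard_coe_finset]
  exact L5 v
end

section
/- The normalized hypergraph Laplacian represents the hypergraph Dirichlet energy and is positive semidefinite: let V be a finite vertex type and E a finite set of hyperedges (nonempty finsets of V) such that every vertex has positive degree d(v) = |{e ∈ E : v ∈ e}| > 0. Let B ∈ ℝ^{V×E} be the incidence matrix with B(v,e) = 1 if v ∈ e and 0 otherwise, D_v the diagonal matrix of vertex degrees, D_e the diagonal matrix of hyperedge cardinalities, and Δ = I − D_v^{−1/2} B D_e^{−1} Bᵀ D_v^{−1/2}. Then for every f : V → ℝ, fᵀ Δ f = (1/2) ∑_{e ∈ E} (1/|e|) ∑_{u ∈ e} ∑_{v ∈ e} ( f(u)/√d(u) − f(v)/√d(v) )²; in particular fᵀ Δ f ≥ 0, so Δ is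 positive semidefinite. -/
open Matrix

variable {V : Type*} [Fintype V] [DecidableEq V]

/-- The degree of a vertex in a hypergraph with hyperedge collection `E`: the number of
hyperedges containing `v`. -/
def hdeg (E : Finset (Finset V)) (v : V) : ℕ := (E.filter fun e => v ∈ e).card

/-- The incidence matrix `B ∈ ℝ^{V×E}` of a hypergraph: `B v e = 1` if `v ∈ e`, else `0`. -/
def incidence (E : Finset (Finset V)) : Matrix V {e // e ∈ E} ℝ :=
  Matrix.of fun v e => if v ∈ (e : Finset V) then 1 else 0

/-- The normalized hypergraph Laplacian `Δ = I − D_v^{−1/2} B D_e^{−1} Bᵀ D_v^{−1/2}`, where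
`D_v` is the diagonal matrix of vertex degrees and `D_e` the diagonal matrix of hyperedge
cardinalities. -/
noncomputable def normLap (E : Finset (Finset V)) : Matrix V V ℝ :=
  1 - Matrix.diagonal (fun v => (Real.sqrt (hdeg E v))⁻¹) * incidence E *
        Matrix.diagonal (fun e : {e // e ∈ E} => ((e : Finset V).card : ℝ)⁻¹) *
        (incidence E)ᵀ * Matrix.diagonal (fun v => (Real.sqrt (hdeg E v))⁻¹)

section
variable {V : Type*} [Fintype V] [DecidableEq V]

private lemma hdeg_sum_aux (E : Finset (Finset V)) (h : V → ℝ) :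
    ∑ e ∈ E, ∑ v ∈ e, h v = ∑ v : V, (hdeg E v : ℝ) * h v := by
  have : ∀ e ∈ E, ∑ v ∈ e, h v = ∑ v : V, if v ∈ e then h v else 0 := by
    intro e _
    rw [Finset.sum_ite_mem, Finset.univ_inter]
  rw [Finset.sum_congr rfl this, Finset.sum_comm]
  refine Finset.sum_congr rfl fun v _ => ?_
  rw [hdeg, Finset.sum_ite, Finset.sum_const_zero, add_zero, Finset.sum_const,
    nsmul_eq_mul]

private theorem normLap_aux
    (E : Finset (Finset V)) (hE : ∀ e ∈ E, e.Nonempty)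
    (hd : ∀ v : V, 0 < hdeg E v) :
    (∀ f : V → ℝ,
      f ⬝ᵥ (normLap E).mulVec f =
        (1 / 2) * ∑ e ∈ E, ((e.card : ℝ))⁻¹ * ∑ u ∈ e, ∑ v ∈ e,
          (f u / Real.sqrt (hdeg E u) - f v / Real.sqrt (hdeg E v)) ^ 2) ∧
    (normLap E).PosSemidef := by
  have hdpos : ∀ v : V, (0 : ℝ) < (hdeg E v : ℝ) := fun v => by exact_mod_cast hd v
  have hsq : ∀ v : V, Real.sqrt (hdeg E v) ≠ 0 := fun v =>
    (Real.sqrt_pos.mpr (hdpos v)).ne'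
  have key : ∀ f : V → ℝ,
      f ⬝ᵥ (normLap E).mulVec f =
        (1 / 2) * ∑ e ∈ E, ((e.card : ℝ))⁻¹ * ∑ u ∈ e, ∑ v ∈ e,
          (f u / Real.sqrt (hdeg E u) - f v / Real.sqrt (hdeg E v)) ^ 2 := by
    intro f
    set g : V → ℝ := fun v => f v / Real.sqrt (hdeg E v) with hg
    set w : {e // e ∈ E} → ℝ :=
      fun e => (((e : Finset V).card : ℝ))⁻¹ * ∑ u ∈ (e : Finset V), g u with hw
    -- LHS computation
    have hL : f ⬝ᵥ (normLap E).mulVec f =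
        ∑ v : V, f v ^ 2 - ∑ e ∈ E, ((e.card : ℝ))⁻¹ * (∑ v ∈ e, g v) ^ 2 := by
      rw [normLap, Matrix.sub_mulVec, dotProduct_sub, Matrix.one_mulVec]
      congr 1
      · simp [dotProduct, sq]
      rw [← Matrix.mulVec_mulVec, ← Matrix.mulVec_mulVec, ← Matrix.mulVec_mulVec,
        ← Matrix.mulVec_mulVec]
      have hD : (Matrix.diagonal fun v => (Real.sqrt (hdeg E v))⁻¹) *ᵥ f = g := by
        funext v
        rw [Matrix.mulVec_diagonal, hg]
        exact (div_eq_inv_mul _ _).symm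
      have hBt : (incidence E)ᵀ *ᵥ g = fun e : {e // e ∈ E} => ∑ v ∈ (e : Finset V), g v := by
        funext e
        simp only [Matrix.mulVec, dotProduct, Matrix.transpose_apply, incidence,
          Matrix.of_apply, ite_mul, one_mul, zero_mul]
        rw [Finset.sum_ite_mem, Finset.univ_inter]
      have hDe : (Matrix.diagonal fun e : {e // e ∈ E} => (((e : Finset V).card : ℝ))⁻¹) *ᵥ
          (fun e => ∑ v ∈ (e : Finset V), g v) = w := by
        funext e
        rw [Matrix.mulVec_diagonal, hw]
      rw [hD, hBt, hDe]
      calc f ⬝ᵥ (Matrix.diagonal fun v => (Real.sqrt (hdeg E v))⁻¹) *ᵥ (incidence E *ᵥ w)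
          = ∑ v : V, ∑ e : {e // e ∈ E}, if v ∈ (e : Finset V) then g v * w e else 0 := by
            refine Finset.sum_congr rfl fun v _ => ?_
            rw [Matrix.mulVec_diagonal]
            simp only [Matrix.mulVec, dotProduct, incidence, Matrix.of_apply,
              ite_mul, one_mul, zero_mul]
            rw [Finset.mul_sum, Finset.mul_sum]
            refine Finset.sum_congr rfl fun e _ => ?_
            by_cases hve : v ∈ (e : Finset V) <;> simp [hve, hg, div_eq_mul_inv] <;> ring
        _ = ∑ e : {e // e ∈ E}, (∑ v ∈ (e : Finset V), g v) * w e := by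
            rw [Finset.sum_comm]
            refine Finset.sum_congr rfl fun e _ => ?_
            rw [Finset.sum_ite_mem, Finset.univ_inter, Finset.sum_mul]
        _ = ∑ e ∈ E, ((e.card : ℝ))⁻¹ * (∑ v ∈ e, g v) ^ 2 := by
            rw [Finset.sum_coe_sort E (fun e => (∑ v ∈ e, g v) *
              (((e.card : ℝ))⁻¹ * ∑ u ∈ e, g u))]
            exact Finset.sum_congr rfl fun e _ => by ring
    -- RHS computation
    have hR : (1 / 2) * ∑ e ∈ E, ((e.card : ℝ))⁻¹ * ∑ u ∈ e, ∑ v ∈ e, (g u - g v) ^ 2 =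
        ∑ v : V, f v ^ 2 - ∑ e ∈ E, ((e.card : ℝ))⁻¹ * (∑ v ∈ e, g v) ^ 2 := by
      have hinner : ∀ e ∈ E, ((e.card : ℝ))⁻¹ * ∑ u ∈ e, ∑ v ∈ e, (g u - g v) ^ 2 =
          2 * ((∑ v ∈ e, g v ^ 2) - ((e.card : ℝ))⁻¹ * (∑ v ∈ e, g v) ^ 2) := by
        intro e he
        have hcard : ((e.card : ℝ)) ≠ 0 := by
          exact_mod_cast (Finset.card_pos.mpr (hE e he)).ne'
        have expand : ∑ u ∈ e, ∑ v ∈ e, (g u - g v) ^ 2 =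
            2 * ((e.card : ℝ) * ∑ v ∈ e, g v ^ 2 - (∑ v ∈ e, g v) ^ 2) := by
          have step : ∀ u ∈ e, ∑ v ∈ e, (g u - g v) ^ 2 =
              (e.card : ℝ) * g u ^ 2 - 2 * g u * ∑ v ∈ e, g v + ∑ v ∈ e, g v ^ 2 := by
            intro u _
            rw [Finset.sum_congr rfl (fun v _ => by ring :
              ∀ v ∈ e, (g u - g v) ^ 2 = g u ^ 2 - 2 * g u * g v + g v ^ 2)]
            rw [Finset.sum_add_distrib, Finset.sum_sub_distrib, Finset.sum_const,
              nsmul_eq_mul, ← Finset.mul_sum]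
          rw [Finset.sum_congr rfl step, Finset.sum_add_distrib, Finset.sum_sub_distrib,
            ← Finset.mul_sum, Finset.sum_const, nsmul_eq_mul]
          rw [show ∀ (S : ℝ), (∑ x ∈ e, 2 * g x * S) = 2 * (∑ x ∈ e, g x) * S from
            fun S => by rw [← Finset.sum_mul, ← Finset.mul_sum]]
          ring
        rw [expand]
        field_simp
      rw [Finset.sum_congr rfl hinner, Finset.mul_sum]
      have hhalf : ∀ e ∈ E, (1 / 2 : ℝ) * (2 * ((∑ v ∈ e, g v ^ 2) -
          ((e.card : ℝ))⁻¹ * (∑ v ∈ e, g v) ^ 2)) =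
          (∑ v ∈ e, g v ^ 2) - ((e.card : ℝ))⁻¹ * (∑ v ∈ e, g v) ^ 2 := by
        intro e _; ring
      rw [Finset.sum_congr rfl hhalf, Finset.sum_sub_distrib, hdeg_sum_aux]
      congr 1
      refine Finset.sum_congr rfl fun v _ => ?_
      rw [hg]
      rw [div_pow, Real.sq_sqrt (hdpos v).le, mul_comm, div_mul_cancel₀ _ (hdpos v).ne']
    rw [hL, hR]
  refine ⟨key, ?_, fun x => ?_⟩
  · have ht : (normLap E)ᵀ = normLap E := by
      rw [normLap]
      simp only [Matrix.transpose_sub, Matrix.transpose_one, Matrix.transpose_mul,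
        Matrix.diagonal_transpose, Matrix.transpose_transpose, Matrix.mul_assoc]
    ext i j
    rw [Matrix.conjTranspose_apply, star_trivial]
    exact congrFun (congrFun ht i) j
  · have hx : (x.sum fun i xi => x.sum fun j xj => star xi * normLap E i j * xj) =
        (⇑x) ⬝ᵥ (normLap E).mulVec ⇑x := by
      simp [Finsupp.sum_fintype, dotProduct, Matrix.mulVec, Finset.mul_sum, mul_assoc]
    rw [hx, key x]
    have hnn : ∀ e ∈ E, (0:ℝ) ≤ ((e.card : ℝ))⁻¹ * ∑ u ∈ e, ∑ v ∈ e,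
        (x u / Real.sqrt (hdeg E u) - x v / Real.sqrt (hdeg E v)) ^ 2 := by
      intro e _
      positivity
    exact mul_nonneg (by norm_num) (Finset.sum_nonneg hnn)
end

/-- The normalized hypergraph Laplacian represents the hypergraph Dirichlet energy and is
positive semidefinite: for every `f : V → ℝ`,
`fᵀ Δ f = (1/2) ∑_{e ∈ E} (1/|e|) ∑_{u,v ∈ e} (f u/√d(u) − f v/√d(v))²`, and `Δ` is
positive semidefinite. -/
theorem normLap_dirichlet_energy_posSemidef
    (E : Finset (Finset V)) (hE : ∀ e ∈ E, e.Nonempty)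
    (hd : ∀ v : V, 0 < hdeg E v) :
    (∀ f : V → ℝ,
      f ⬝ᵥ (normLap E).mulVec f =
        (1 / 2) * ∑ e ∈ E, ((e.card : ℝ))⁻¹ * ∑ u ∈ e, ∑ v ∈ e,
          (f u / Real.sqrt (hdeg E u) - f v / Real.sqrt (hdeg E v)) ^ 2) ∧
    (normLap E).PosSemidef :=
  normLap_aux E hE hd
end
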